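/- Let N : (0, R] → [0, ∞) be differentiable with N'(r) ≥ −(2/r) N(r)(1 + N(r)). Fix r ∈ (0, R] and δ ∈ (0, 1) with N(r) ≤ δ. Then for all s with √(2δ/(1+2δ)) · r < s ≤ r, one has N(s) ≤ 2δ (r/s)². -/

import Mathlib

/-!
Along the differential inequality the quantity `r² · N / (1 + N)` is nondecreasing in `r`, since its
derivative is `(2 r N (1 + N) + r² N') / (1 + N)²`. Comparing it at `s ≤ r` bounds `N(s) / (1 + N(s))`
by `δ/(1+δ) · (r/s)²`, and inverting `t ↦ t / (1 + t)` gives `N(s) ≤ 2δ (r/s)²` as long as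
`2δ (r/s)² < 1 + 2δ`, which is exactly the lower bound on `s`.
-/

open Set

lemma hasDerivAt_sq_mul_div_one_add {N : ℝ → ℝ} {N' x : ℝ} (hN : HasDerivAt N N' x)
    (hx : 1 + N x ≠ 0) :
    HasDerivAt (fun y => y ^ 2 * (N y / (1 + N y)))
      ((2 * x * N x * (1 + N x) + x ^ 2 * N') / (1 + N x) ^ 2) x := by
  have hquot : HasDerivAt (fun y => N y / (1 + N y)) (N' / (1 + N x) ^ 2) x :=
    (hN.div ((hasDerivAt_const x 1).add hN) hx).congr_deriv (by simp only [Pi.add_apply]; ring)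
  exact ((hasDerivAt_pow 2 x).mul hquot).congr_deriv (by field_simp; ring)

lemma monotoneOn_sq_mul_div_one_add {R : ℝ} {N N' : ℝ → ℝ}
    (hN0 : ∀ r ∈ Ioc 0 R, 0 ≤ N r)
    (hderiv : ∀ r ∈ Ioc 0 R, HasDerivAt N (N' r) r)
    (hineq : ∀ r ∈ Ioc 0 R, -(2 / r) * N r * (1 + N r) ≤ N' r) :
    MonotoneOn (fun x => x ^ 2 * (N x / (1 + N x))) (Ioc 0 R) := by
  have hD : ∀ x ∈ Ioc 0 R, HasDerivAt (fun y => y ^ 2 * (N y / (1 + N y)))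
      ((2 * x * N x * (1 + N x) + x ^ 2 * N' x) / (1 + N x) ^ 2) x := fun x hx =>
    hasDerivAt_sq_mul_div_one_add (hderiv x hx) (by linarith [hN0 x hx])
  refine monotoneOn_of_deriv_nonneg (convex_Ioc 0 R)
    (fun x hx => (hD x hx).continuousAt.continuousWithinAt)
    (fun x hx => (hD x (interior_subset hx)).differentiableAt.differentiableWithinAt)
    (fun x hx => ?_)
  have hx : x ∈ Ioc 0 R := interior_subset hx
  rw [(hD x hx).deriv]
  have hineq' : x ^ 2 * (-(2 / x) * N x * (1 + N x)) ≤ x ^ 2 * N' x :=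
    mul_le_mul_of_nonneg_left (hineq x hx) (sq_nonneg x)
  have hcancel : x ^ 2 * (-(2 / x) * N x * (1 + N x)) = -(2 * x * N x * (1 + N x)) := by
    field_simp [hx.1.ne']
  exact div_nonneg (by linarith) (sq_nonneg _)

lemma div_one_add_le_div_one_add {a b : ℝ} (ha : 0 ≤ a) (hab : a ≤ b) :
    a / (1 + a) ≤ b / (1 + b) := by
  rw [div_le_div_iff₀ (by linarith) (by linarith)]
  linarith

lemma le_two_mul_of_div_one_add_le {a δ q : ℝ} (ha : 0 ≤ a) (hδ : 0 ≤ δ)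
    (hq : 2 * δ * q < 1 + 2 * δ) (h : a / (1 + a) ≤ δ / (1 + δ) * q) :
    a ≤ 2 * δ * q := by
  rw [div_mul_eq_mul_div, div_le_div_iff₀ (by linarith) (by linarith)] at h
  nlinarith

theorem stmt_6_general (R : ℝ) (N N' : ℝ → ℝ)
    (hN0 : ∀ r ∈ Set.Ioc (0:ℝ) R, 0 ≤ N r)
    (hderiv : ∀ r ∈ Set.Ioc (0:ℝ) R, HasDerivAt N (N' r) r)
    (hineq : ∀ r ∈ Set.Ioc (0:ℝ) R, -(2 / r) * N r * (1 + N r) ≤ N' r)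
    (r : ℝ) (hr : r ∈ Set.Ioc (0:ℝ) R)
    (δ : ℝ) (hδ : δ ∈ Set.Ioo (0:ℝ) 1) (hNr : N r ≤ δ) :
    ∀ s : ℝ, Real.sqrt (2 * δ / (1 + 2 * δ)) * r < s → s ≤ r →
      N s ≤ 2 * δ * (r / s) ^ 2 := by
  intro s hs hsr
  have hr0 : 0 < r := hr.1
  have hs0 : 0 < s := lt_of_le_of_lt (mul_nonneg (Real.sqrt_nonneg _) hr0.le) hs
  have hsR : s ∈ Ioc 0 R := ⟨hs0, hsr.trans hr.2⟩
  have hcompare : s ^ 2 * (N s / (1 + N s)) ≤ r ^ 2 * (δ / (1 + δ)) :=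
    (monotoneOn_sq_mul_div_one_add hN0 hderiv hineq hsR hr hsr).trans
      (mul_le_mul_of_nonneg_left (div_one_add_le_div_one_add (hN0 r hr) hNr) (sq_nonneg r))
  refine le_two_mul_of_div_one_add_le (hN0 s hsR) hδ.1.le ?_ ?_
  · have hsqrt : 2 * δ / (1 + 2 * δ) < (s / r) ^ 2 :=
      (Real.sqrt_lt' (div_pos hs0 hr0)).1 ((lt_div_iff₀ hr0).2 hs)
    rw [div_lt_iff₀ (by linarith [hδ.1]), div_pow] at hsqrt
    rw [div_pow, ← mul_div_assoc, div_lt_iff₀ (by positivity)]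
    rw [div_mul_eq_mul_div, lt_div_iff₀ (by positivity)] at hsqrt
    linarith
  · rw [div_pow, mul_div_assoc', le_div_iff₀ (by positivity)]
    linarith

theorem stmt_6 (R : ℝ) (hR : 0 < R) (N N' : ℝ → ℝ)
    (hN0 : ∀ r ∈ Set.Ioc (0:ℝ) R, 0 ≤ N r)
    (hderiv : ∀ r ∈ Set.Ioc (0:ℝ) R, HasDerivAt N (N' r) r)
    (hineq : ∀ r ∈ Set.Ioc (0:ℝ) R, -(2 / r) * N r * (1 + N r) ≤ N' r)
    (r : ℝ) (hr : r ∈ Set.Ioc (0:ℝ) R)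
    (δ : ℝ) (hδ : δ ∈ Set.Ioo (0:ℝ) 1) (hNr : N r ≤ δ) :
    ∀ s : ℝ, Real.sqrt (2 * δ / (1 + 2 * δ)) * r < s → s ≤ r →
      N s ≤ 2 * δ * (r / s) ^ 2 :=
  stmt_6_general R N N' hN0 hderiv hineq r hr δ hδ hNr
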